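/- arXiv:cmp-lg/9709011 — 3 statements merged into one kernel-verified Lean document; each statement's English description precedes it below -/
import Mathlib

section
/- If A strictly subsumes B (A ⊑ B but not B ⊑ A) via morphism h, then at least one of the following holds: (1) there is a path π ∈ Π(B) \ Π(A); (2) there is a node q ∈ Q_A with θ(q) strictly below θ(h(q)); (3) there are paths π₁, π₂ ∈ Π(A) with δ_A(q̄_A,π₁) ≠ δ_A(q̄_A,π₂) but δ_B(q̄_B,π₁) = δ_B(q̄_B,π₂). -/
/-! Typed feature structures (TFSs), following Carpenter 1992.
`pathδ` extends the partial transition function `δ` to paths (lists of features). -/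

variable {Nodes Feats Types : Type}

def pathδ (δ : Nodes → Feats → Option Nodes) : Nodes → List Feats → Option Nodes
  | q, [] => some q
  | q, f :: π => (δ q f).bind fun q' => pathδ δ q' π

/-- A typed feature structure: a finite set of nodes `Q`, a root, and a partial
transition function `δ : Q × Feats ⇀ Q` (modelled as `none` outside its domain,
undefined outside `Q`), with every node reachable from the root. -/
structure TFS (Nodes Feats : Type) where
  Q : Finset Nodes
  root : Nodes
  root_mem : root ∈ Q
  δ : Nodes → Feats → Option Nodes
  dom : ∀ q f, (δ q f).isSome → q ∈ Q
  closed : ∀ q f q', δ q f = some q' → q' ∈ Q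
  reach : ∀ q ∈ Q, ∃ π : List Feats, pathδ δ root π = some q

/-- The set of paths defined from the root of `A`. -/
def TFS.Pi (A : TFS Nodes Feats) : Set (List Feats) :=
  {π | (pathδ A.δ A.root π).isSome}

/-- `A` is cyclic if some node returns to itself along a nonempty path. -/
def TFS.Cyclic (A : TFS Nodes Feats) : Prop :=
  ∃ q ∈ A.Q, ∃ α : List Feats, α ≠ [] ∧ pathδ A.δ q α = some q

def TFS.Acyclic (A : TFS Nodes Feats) : Prop := ¬ A.Cyclic

/-- A subsumption morphism from `A` to `B` w.r.t. the typing function `θ`: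
maps root to root, maps `Q_A` into `Q_B`, is monotone on node types,
and commutes with the transition function. -/
def IsMorphism [PartialOrder Types] (θ : Nodes → Types)
    (A B : TFS Nodes Feats) (h : Nodes → Nodes) : Prop :=
  h A.root = B.root ∧ (∀ q ∈ A.Q, h q ∈ B.Q) ∧ (∀ q ∈ A.Q, θ q ≤ θ (h q)) ∧
  ∀ q f q', A.δ q f = some q' → B.δ (h q) f = some (h q')

/-- `A` subsumes `B` iff some subsumption morphism from `A` to `B` exists. -/
def Subsumes [PartialOrder Types] (θ : Nodes → Types) (A B : TFS Nodes Feats) : Prop :=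
  ∃ h, IsMorphism θ A B h

/-- Strict subsumption: `A ⊏ B` iff `A ⊑ B` and not `B ⊑ A`. -/
def StrictlySubsumes [PartialOrder Types] (θ : Nodes → Types) (A B : TFS Nodes Feats) : Prop :=
  Subsumes θ A B ∧ ¬ Subsumes θ B A

/-!
If `B` has no path missing in `A`, no reentrancy missing in `A`, and `h` raises no type, then
sending a node of `B` reached along `π` to the node of `A` reached along `π` is well defined
and is a subsumption morphism from `B` back to `A`, contradicting strictness. Its type
condition holds because `h` inverts it and `h` preserves types.
-/

theorem pathδ_append (δ : Nodes → Feats → Option Nodes) (q : Nodes) (π ρ : List Feats) :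
    pathδ δ q (π ++ ρ) = (pathδ δ q π).bind fun p => pathδ δ p ρ := by
  induction π generalizing q with
  | nil => rfl
  | cons f π ih =>
    simp only [List.cons_append, pathδ, Option.bind_assoc, ih]

theorem TFS.pathδ_mem (A : TFS Nodes Feats) {q p : Nodes} {π : List Feats}
    (hq : q ∈ A.Q) (hp : pathδ A.δ q π = some p) : p ∈ A.Q := by
  induction π generalizing q with
  | nil => exact Option.some_injective _ hp ▸ hq
  | cons f π ih =>
    obtain ⟨q', hq', hp⟩ := Option.bind_eq_some_iff.mp hp
    exact ih (A.closed _ _ _ hq') hp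

theorem IsMorphism.map_pathδ [PartialOrder Types] {θ : Nodes → Types} {A B : TFS Nodes Feats}
    {h : Nodes → Nodes} (hm : IsMorphism θ A B h) {q p : Nodes} {π : List Feats}
    (hp : pathδ A.δ q π = some p) : pathδ B.δ (h q) π = some (h p) := by
  induction π generalizing q with
  | nil => exact congrArg (some ∘ h) (Option.some_injective _ hp)
  | cons f π ih =>
    obtain ⟨q', hq', hp⟩ := Option.bind_eq_some_iff.mp hp
    exact Option.bind_eq_some_iff.mpr ⟨h q', hm.2.2.2 _ _ _ hq', ih hp⟩

theorem IsMorphism.apply_eq_of_pathδ_root [PartialOrder Types] {θ : Nodes → Types}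
    {A B : TFS Nodes Feats} {h : Nodes → Nodes} (hm : IsMorphism θ A B h) {p q : Nodes}
    {π : List Feats} (hA : pathδ A.δ A.root π = some p) (hB : pathδ B.δ B.root π = some q) :
    h p = q := by
  have := hm.map_pathδ hA
  rw [hm.1, hB] at this
  exact (Option.some_injective _ this).symm

theorem exists_pathδ_root_transfer {A B : TFS Nodes Feats} (hPi : B.Pi ⊆ A.Pi)
    (hre : ∀ π₁ ∈ A.Pi, ∀ π₂ ∈ A.Pi, pathδ B.δ B.root π₁ = pathδ B.δ B.root π₂ →
      pathδ A.δ A.root π₁ = pathδ A.δ A.root π₂) :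
    ∃ g : Nodes → Nodes, ∀ q π, pathδ B.δ B.root π = some q →
      pathδ A.δ A.root π = some (g q) := by
  suffices ∀ q, ∃ p, ∀ π, pathδ B.δ B.root π = some q → pathδ A.δ A.root π = some p by
    choose g hg using this
    exact ⟨g, hg⟩
  intro q
  by_cases hq : ∃ π₀, pathδ B.δ B.root π₀ = some q
  · obtain ⟨π₀, hπ₀⟩ := hq
    have hπ₀A : π₀ ∈ A.Pi := hPi (by simp [TFS.Pi, hπ₀])
    obtain ⟨p, hp⟩ := Option.isSome_iff_exists.mp hπ₀A
    refine ⟨p, fun π hπ => ?_⟩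
    have hπA : π ∈ A.Pi := hPi (by simp [TFS.Pi, hπ])
    exact (hre π hπA π₀ hπ₀A (hπ.trans hπ₀.symm)).trans hp
  · exact ⟨q, fun π hπ => (hq ⟨π, hπ⟩).elim⟩

theorem isMorphism_of_pathδ_root [PartialOrder Types] {θ : Nodes → Types}
    {A B : TFS Nodes Feats} {g : Nodes → Nodes}
    (hg : ∀ q π, pathδ A.δ A.root π = some q → pathδ B.δ B.root π = some (g q))
    (hθ : ∀ q ∈ A.Q, θ q ≤ θ (g q)) : IsMorphism θ A B g := by
  have hroot : pathδ B.δ B.root [] = some (g A.root) := hg A.root [] rfl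
  refine ⟨(Option.some_injective _ hroot).symm, fun q hq => ?_, hθ, fun q f q' hδ => ?_⟩
  · obtain ⟨π, hπ⟩ := A.reach q hq
    exact B.pathδ_mem B.root_mem (hg q π hπ)
  · obtain ⟨π, hπ⟩ := A.reach q (A.dom q f (by simp [hδ]))
    have hπf : pathδ A.δ A.root (π ++ [f]) = some q' := by
      simp [pathδ_append, hπ, pathδ, hδ]
    have := hg q' _ hπf
    rw [pathδ_append, hg q π hπ] at this
    simpa [pathδ] using this

/-- If `A` strictly subsumes `B` via morphism `h`, then either (1) `B` has a
path that `A` lacks, or (2) some node of `A` has a strictly more specific image type,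
or (3) `B` has a reentrancy that `A` lacks. -/
theorem strict_subsumption_trichotomy [PartialOrder Types] (θ : Nodes → Types)
    (A B : TFS Nodes Feats) (h : Nodes → Nodes)
    (hm : IsMorphism θ A B h) (hstrict : ¬ Subsumes θ B A) :
    (∃ π, π ∈ B.Pi ∧ π ∉ A.Pi) ∨
    (∃ q ∈ A.Q, θ q < θ (h q)) ∨
    (∃ π₁ π₂, π₁ ∈ A.Pi ∧ π₂ ∈ A.Pi ∧
      pathδ A.δ A.root π₁ ≠ pathδ A.δ A.root π₂ ∧
      pathδ B.δ B.root π₁ = pathδ B.δ B.root π₂) := by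
  by_contra! hcon
  obtain ⟨hPi, hθ, hre⟩ := hcon
  obtain ⟨g, hg⟩ := exists_pathδ_root_transfer hPi fun π₁ h₁ π₂ h₂ hB =>
    not_not.mp fun hA => hre π₁ π₂ h₁ h₂ hA hB
  refine hstrict ⟨g, isMorphism_of_pathδ_root hg fun q hq => ?_⟩
  obtain ⟨π, hπ⟩ := B.reach q hq
  have hgq : g q ∈ A.Q := A.pathδ_mem A.root_mem (hg q π hπ)
  have hθg : θ (g q) = θ (h (g q)) := (hm.2.2.1 _ hgq).eq_of_not_lt (hθ _ hgq)
  rw [hθg, hm.apply_eq_of_pathδ_root (hg q π hπ) hπ]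
end

section
/- Subsumption of general (possibly cyclic) TFSs is not well-founded: there exists an infinite strictly decreasing chain A₀ ⊐ A₁ ⊐ A₂ ⊐ ⋯ of TFSs. Concretely, with a single feature f and a single type, letting A_i be the TFS with nodes q₀,…,q_i, arcs δ(q_j, f) = q_{j+1} for j < i and δ(q_i, f) = q_i, each A_i strictly subsumes A_{i+1}. -/
/-! Typed feature structures (TFSs), following Carpenter 1992.
`pathδ` extends the partial transition function `δ` to paths (lists of features). -/

variable {Nodes Feats Types : Type}

def lassoδ (i : ℕ) : ℕ → Unit → Option ℕ := fun j _ =>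
  if j < i then some (j + 1) else if j = i then some j else none

lemma lasso_path (i : ℕ) : ∀ (k a : ℕ), a + k ≤ i →
    pathδ (lassoδ i) a (List.replicate k ()) = some (a + k) := by
  intro k
  induction k with
  | zero => intro a _; simp [pathδ]
  | succ k ih =>
    intro a ha
    have h1 : a < i := by omega
    have : pathδ (lassoδ i) a (List.replicate (k+1) ()) =
        pathδ (lassoδ i) (a+1) (List.replicate k ()) := by
      simp [List.replicate_succ, pathδ, lassoδ, h1]
    rw [this, ih (a+1) (by omega)]
    congr 1; omega

def lasso (i : ℕ) : TFS ℕ Unit where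
  Q := Finset.range (i + 1)
  root := 0
  root_mem := by simp
  δ := lassoδ i
  dom := by
    intro q f h
    simp only [lassoδ] at h
    split_ifs at h with h1 h2 <;> simp_all <;> omega
  closed := by
    intro q f q' h
    simp only [lassoδ] at h
    split_ifs at h with h1 h2 <;> simp_all <;> omega
  reach := by
    intro q hq
    simp at hq
    exact ⟨List.replicate q (), by simpa using lasso_path i q 0 (by omega)⟩

/-- Subsumption of general (possibly cyclic) TFSs is not well-founded.
Concretely, over a single feature and a single type, the 'lasso' TFSs `A i`
(nodes `0,…,i`, arcs `j ↦ j+1` for `j < i` and a self-loop at `i`) form an infinite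
strictly decreasing chain: each `A (i+1)` strictly subsumes `A i`. -/
theorem cyclic_subsumption_not_well_founded :
    ∃ A : ℕ → TFS ℕ Unit,
      (∀ i, (A i).Q = Finset.range (i + 1) ∧ (A i).root = 0 ∧
        ∀ j, (A i).δ j () =
          if j < i then some (j + 1) else if j = i then some j else none) ∧
      (∀ i, StrictlySubsumes (fun _ : ℕ => ()) (A (i + 1)) (A i)) := by
  refine ⟨lasso, fun i => ⟨rfl, rfl, fun j => rfl⟩, fun i => ⟨⟨fun q => min q i, ?_, ?_, ?_, ?_⟩, ?_⟩⟩
  · simp [lasso]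
  · intro q hq
    simp only [lasso, Finset.mem_range] at hq ⊢
    omega
  · intro q _; exact le_refl _
  · intro q f q' h
    simp only [lasso, lassoδ] at h ⊢
    split_ifs at h with h1 h2 <;> cases h
    · by_cases hq : q < i
      · rw [Nat.min_eq_left (by omega : q ≤ i), Nat.min_eq_left (by omega : q + 1 ≤ i),
          if_pos hq]
      · rw [Nat.min_eq_left (by omega : q ≤ i), Nat.min_eq_right (by omega : i ≤ q + 1),
          if_neg (by omega : ¬ q < i), if_pos (by omega : q = i)]
        exact congrArg some (by omega)
    · subst h2
      rw [Nat.min_eq_right (by omega : i ≤ i + 1)]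
      simp
  · rintro ⟨h, hroot, _, _, hδ⟩
    have key : ∀ j ≤ i, h j = j := by
      intro j
      induction j with
      | zero => intro _; exact hroot
      | succ j ih =>
        intro hj
        have hji : j < i := by omega
        have hd : (lasso i).δ j () = some (j + 1) := by
          simp [lasso, lassoδ, hji]
        have := hδ j () (j+1) hd
        rw [ih (by omega)] at this
        simp only [lasso, lassoδ, if_pos (by omega : j < i + 1)] at this
        exact (Option.some_injective _ this).symm
    have hd : (lasso i).δ i () = some i := by
      simp [lasso, lassoδ]
    have := hδ i () i hd
    rw [key i le_rfl] at this
    simp only [lasso, lassoδ, if_pos (by omega : i < i + 1), Option.some.injEq] at this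
    omega
end

section
/- Specification (the inverse of subsumption) is not well-founded even on acyclic TFSs: there is an infinite strictly increasing chain B₀ ⊏ B₁ ⊏ B₂ ⊏ ⋯ of acyclic TFSs. Concretely, with feature f and types ⊥ ⊏ t, let B_i have i+1 nodes in an f-chain, the first i typed t and the last typed ⊥; then B_i ⊏ B_{i+1} for all i. -/
/-! Typed feature structures (TFSs), following Carpenter 1992.
`pathδ` extends the partial transition function `δ` to paths (lists of features). -/

variable {Nodes Feats Types : Type}

/-- The typing function: chain nodes `Sum.inl n` have type `t = true`, the final node
`Sum.inr ()` has type `⊥ = false` (with `false < true` in `Bool`). -/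
def θ₀ : ℕ ⊕ Unit → Bool := Sum.elim (fun _ => true) (fun _ => false)

/-! An `f`-path from the root of `B i` has at most `i` steps, since the position along the chain
strictly increases at each step and is at most `i`; the same rank argument shows that `B i` is
acyclic. Subsumption morphisms transport defined paths, so `B (i + 1)`, which has a path of length
`i + 1`, cannot subsume `B i`. Conversely, `B i` embeds into `B (i + 1)` by sending its final
`⊥`-node to the `t`-typed node `i`, which is more specific. -/

theorem pathδ_add_length_le_of_rank {δ : Nodes → Feats → Option Nodes} (rank : Nodes → ℕ)
    (hrank : ∀ q f q', δ q f = some q' → rank q < rank q') :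
    ∀ {α : List Feats} {q q' : Nodes}, pathδ δ q α = some q' → rank q + α.length ≤ rank q'
  | [], q, q', h => by simp_all [pathδ]
  | f :: α, q, q', h => by
    obtain ⟨q'', hstep, hrest⟩ := Option.bind_eq_some_iff.mp h
    have := hrank q f q'' hstep
    have := pathδ_add_length_le_of_rank rank hrank hrest
    simp only [List.length_cons]
    omega

namespace TFS

theorem pathδ_mem_s13 (A : TFS Nodes Feats) :
    ∀ {α : List Feats} {q q' : Nodes}, q ∈ A.Q → pathδ A.δ q α = some q' → q' ∈ A.Q
  | [], q, q', hq, h => by simp_all [pathδ]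
  | f :: α, q, q', _, h => by
    obtain ⟨q'', hstep, hrest⟩ := Option.bind_eq_some_iff.mp h
    exact A.pathδ_mem_s13 (A.closed q f q'' hstep) hrest

theorem acyclic_of_rank (A : TFS Nodes Feats) (rank : Nodes → ℕ)
    (hrank : ∀ q f q', A.δ q f = some q' → rank q < rank q') : A.Acyclic := by
  rintro ⟨q, -, α, hα, h⟩
  have := pathδ_add_length_le_of_rank rank hrank h
  have := List.length_pos_iff.mpr hα
  omega

theorem length_le_of_mem_Pi (A : TFS Nodes Feats) {n : ℕ} (rank : Nodes → ℕ)
    (hrank : ∀ q f q', A.δ q f = some q' → rank q < rank q')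
    (hbound : ∀ q ∈ A.Q, rank q ≤ n) {α : List Feats} (hα : α ∈ A.Pi) : α.length ≤ n := by
  obtain ⟨q, hq⟩ := Option.isSome_iff_exists.mp hα
  have := pathδ_add_length_le_of_rank rank hrank hq
  have := hbound q (A.pathδ_mem_s13 A.root_mem hq)
  omega

end TFS

theorem IsMorphism.pathδ_eq_some [PartialOrder Types] {θ : Nodes → Types}
    {A B : TFS Nodes Feats} {h : Nodes → Nodes} (hh : IsMorphism θ A B h) :
    ∀ {α : List Feats} {q q' : Nodes}, pathδ A.δ q α = some q' → pathδ B.δ (h q) α = some (h q')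
  | [], q, q', hq => by simp_all [pathδ]
  | f :: α, q, q', hq => by
    obtain ⟨q'', hstep, hrest⟩ := Option.bind_eq_some_iff.mp hq
    exact Option.bind_eq_some_iff.mpr ⟨h q'', hh.2.2.2 q f q'' hstep, hh.pathδ_eq_some hrest⟩

theorem Subsumes.Pi_subset [PartialOrder Types] {θ : Nodes → Types} {A B : TFS Nodes Feats}
    (hAB : Subsumes θ A B) : A.Pi ⊆ B.Pi := by
  obtain ⟨h, hh⟩ := hAB
  intro α hα
  obtain ⟨q, hq⟩ := Option.isSome_iff_exists.mp hα
  have hB := hh.pathδ_eq_some hq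
  rw [hh.1] at hB
  simp [TFS.Pi, hB]

def chainNode (i j : ℕ) : ℕ ⊕ Unit := if j < i then Sum.inl j else Sum.inr ()

def chainQ (i : ℕ) : Finset (ℕ ⊕ Unit) := (Finset.range i).image Sum.inl ∪ {Sum.inr ()}

def chainδ (i : ℕ) : ℕ ⊕ Unit → Unit → Option (ℕ ⊕ Unit)
  | Sum.inl j, _ => if j + 1 < i then some (Sum.inl (j + 1))
      else if j + 1 = i then some (Sum.inr ()) else none
  | Sum.inr _, _ => none

def chainRank (i : ℕ) : ℕ ⊕ Unit → ℕ := Sum.elim id fun _ => i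

theorem chainNode_of_lt {i j : ℕ} (h : j < i) : chainNode i j = Sum.inl j := if_pos h

theorem chainNode_self (i : ℕ) : chainNode i i = Sum.inr () := if_neg (lt_irrefl i)

theorem mem_chainQ {i : ℕ} {q : ℕ ⊕ Unit} : q ∈ chainQ i ↔ ∃ j ≤ i, chainNode i j = q := by
  constructor
  · intro hq
    rcases q with j | u
    · have hj : j < i := by simpa [chainQ] using hq
      exact ⟨j, hj.le, chainNode_of_lt hj⟩
    · exact ⟨i, le_rfl, chainNode_self i⟩
  · rintro ⟨j, hj, rfl⟩
    rcases hj.lt_or_eq with hj | rfl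
    · simp [chainQ, chainNode_of_lt hj, hj]
    · simp [chainQ, chainNode_self]

theorem chainδ_eq_some {i : ℕ} {q q' : ℕ ⊕ Unit} {f : Unit} :
    chainδ i q f = some q' ↔ ∃ j < i, chainNode i j = q ∧ chainNode i (j + 1) = q' := by
  constructor
  · intro h
    rcases q with j | u
    · simp only [chainδ] at h
      split_ifs at h with h1 h2 <;> cases h
      · exact ⟨j, by omega, chainNode_of_lt (by omega), chainNode_of_lt h1⟩
      · exact ⟨j, by omega, chainNode_of_lt (by omega), h2 ▸ chainNode_self _⟩
    · simp [chainδ] at h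
  · rintro ⟨j, hj, rfl, rfl⟩
    rw [chainNode_of_lt hj]
    rcases (Nat.succ_le_of_lt hj).lt_or_eq with h | rfl
    · simp [chainδ, chainNode_of_lt h, h]
    · simp [chainδ, chainNode_self]

theorem pathδ_chainNode_replicate {i : ℕ} :
    ∀ {j k : ℕ}, j + k ≤ i →
      pathδ (chainδ i) (chainNode i j) (List.replicate k ()) = some (chainNode i (j + k))
  | j, 0, _ => rfl
  | j, k + 1, h => by
    have hstep := (chainδ_eq_some (i := i) (f := ())).mpr ⟨j, by omega, rfl, rfl⟩
    rw [List.replicate_succ, pathδ, hstep, Option.bind_some,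
      pathδ_chainNode_replicate (j := j + 1) (by omega), Nat.add_right_comm, Nat.add_assoc]

theorem chainRank_chainNode {i j : ℕ} (h : j ≤ i) : chainRank i (chainNode i j) = j := by
  rcases h.lt_or_eq with h | rfl
  · simp [chainNode_of_lt h, chainRank]
  · simp [chainNode_self, chainRank]

theorem chainRank_lt_of_chainδ {i : ℕ} {q q' : ℕ ⊕ Unit} {f : Unit} (h : chainδ i q f = some q') :
    chainRank i q < chainRank i q' := by
  obtain ⟨j, hj, rfl, rfl⟩ := chainδ_eq_some.mp h
  rw [chainRank_chainNode hj.le, chainRank_chainNode hj]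
  omega

theorem chainNode_zero (i : ℕ) :
    chainNode i 0 = if i = 0 then Sum.inr () else Sum.inl 0 := by
  rcases Nat.eq_zero_or_pos i with rfl | hi
  · rfl
  · simp [chainNode_of_lt hi, hi.ne']

def chainTFS (i : ℕ) : TFS (ℕ ⊕ Unit) Unit where
  Q := chainQ i
  root := if i = 0 then Sum.inr () else Sum.inl 0
  root_mem := by
    rw [← chainNode_zero]
    exact mem_chainQ.mpr ⟨0, Nat.zero_le i, rfl⟩
  δ := chainδ i
  dom q f h := by
    obtain ⟨q', hq'⟩ := Option.isSome_iff_exists.mp h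
    obtain ⟨j, hj, rfl, -⟩ := chainδ_eq_some.mp hq'
    exact mem_chainQ.mpr ⟨j, hj.le, rfl⟩
  closed q f q' h := by
    obtain ⟨j, hj, -, rfl⟩ := chainδ_eq_some.mp h
    exact mem_chainQ.mpr ⟨j + 1, hj, rfl⟩
  reach q hq := by
    obtain ⟨j, hj, rfl⟩ := mem_chainQ.mp hq
    refine ⟨List.replicate j (), ?_⟩
    rw [← chainNode_zero]
    simpa using pathδ_chainNode_replicate (i := i) (j := 0) (k := j) (by omega)

theorem chainTFS_root (i : ℕ) : (chainTFS i).root = chainNode i 0 :=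
  (chainNode_zero i).symm

theorem chainTFS_acyclic (i : ℕ) : (chainTFS i).Acyclic :=
  (chainTFS i).acyclic_of_rank (chainRank i) fun _ _ _ => chainRank_lt_of_chainδ

theorem length_le_of_mem_chainTFS_Pi {i : ℕ} {α : List Unit} (hα : α ∈ (chainTFS i).Pi) :
    α.length ≤ i := by
  refine (chainTFS i).length_le_of_mem_Pi (chainRank i) (fun _ _ _ => chainRank_lt_of_chainδ)
    (fun q hq => ?_) hα
  obtain ⟨j, hj, rfl⟩ := mem_chainQ.mp hq
  rw [chainRank_chainNode hj]
  exact hj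

theorem replicate_mem_chainTFS_Pi (i : ℕ) : List.replicate i () ∈ (chainTFS i).Pi := by
  have h := pathδ_chainNode_replicate (i := i) (j := 0) (k := i) (by omega)
  show (pathδ (chainδ i) (chainTFS i).root _).isSome
  rw [chainTFS_root, h]
  rfl

def chainEmbedding (i : ℕ) : ℕ ⊕ Unit → ℕ ⊕ Unit := Sum.elim Sum.inl fun _ => Sum.inl i

theorem chainEmbedding_chainNode {i j : ℕ} (h : j ≤ i) :
    chainEmbedding i (chainNode i j) = chainNode (i + 1) j := by
  rw [chainNode_of_lt (Nat.lt_succ_of_le h)]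
  rcases h.lt_or_eq with h | rfl
  · simp [chainNode_of_lt h, chainEmbedding]
  · simp [chainNode_self, chainEmbedding]

theorem isMorphism_chainEmbedding (i : ℕ) :
    IsMorphism θ₀ (chainTFS i) (chainTFS (i + 1)) (chainEmbedding i) := by
  refine ⟨?_, fun q hq => ?_, fun q _ => by cases q <;> exact Bool.le_true _, fun q f q' hq' => ?_⟩
  · rw [chainTFS_root, chainTFS_root, chainEmbedding_chainNode (Nat.zero_le i)]
  · obtain ⟨j, hj, rfl⟩ := mem_chainQ.mp hq
    rw [chainEmbedding_chainNode hj]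
    exact mem_chainQ.mpr ⟨j, by omega, rfl⟩
  · obtain ⟨j, hj, rfl, rfl⟩ := chainδ_eq_some.mp hq'
    rw [chainEmbedding_chainNode hj.le, chainEmbedding_chainNode hj]
    exact chainδ_eq_some.mpr ⟨j, by omega, rfl, rfl⟩

theorem not_subsumes_chainTFS_succ (i : ℕ) : ¬ Subsumes θ₀ (chainTFS (i + 1)) (chainTFS i) := by
  intro h
  have := length_le_of_mem_chainTFS_Pi (h.Pi_subset (replicate_mem_chainTFS_Pi (i + 1)))
  simp at this

/-- Specification (the inverse of subsumption) is not well-founded even on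
acyclic TFSs. Concretely, with one feature and types `⊥ ⊏ t`, letting `B i` be an
`f`-chain of `i+1` nodes, the first `i` typed `t` and the last typed `⊥`, the `B i`
form an infinite strictly increasing chain `B₀ ⊏ B₁ ⊏ B₂ ⊏ ⋯` of acyclic TFSs. -/
theorem specification_not_well_founded :
    ∃ B : ℕ → TFS (ℕ ⊕ Unit) Unit,
      (∀ i, (B i).Q = (Finset.range i).image Sum.inl ∪ {Sum.inr ()} ∧
        (B i).root = (if i = 0 then Sum.inr () else Sum.inl 0) ∧
        (∀ j, (B i).δ (Sum.inl j) () =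
          if j + 1 < i then some (Sum.inl (j + 1))
          else if j + 1 = i then some (Sum.inr ()) else none) ∧
        (B i).δ (Sum.inr ()) () = none) ∧
      (∀ i, (B i).Acyclic) ∧
      (∀ i, StrictlySubsumes θ₀ (B i) (B (i + 1))) :=
  ⟨chainTFS, fun _ => ⟨rfl, rfl, fun _ => rfl, rfl⟩, chainTFS_acyclic,
    fun i => ⟨⟨chainEmbedding i, isMorphism_chainEmbedding i⟩, not_subsumes_chainTFS_succ i⟩⟩
end
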